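/- arXiv:2401.11294 — 3 statements merged into one kernel-verified Lean document; each statement's English description precedes it below -/
import Mathlib

section
/- The generating function R(x) for non-lazy returning walks on the N-regular tree T_N satisfies R(x) = 1 + N x² R(x) B(x), where B(x) is the generating function for returning walks on the rooted tree, and consequently R(x) = (2 + N(√(1-(γx)²) - 1))/(2(1-(Nx)²)) with γ = 2√(N-1). -/
/-- One non-lazy step on the `N`-regular tree `T_N`, realized as the Cayley graph of
the free product of `N` copies of `ℤ/2`: vertices are reduced words over `Fin N`
(no two equal consecutive letters), and applying the generator `a` either cancels
the leading letter (if it equals `a`) or prepends `a`. -/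
def regStep (N : ℕ) (l : List (Fin N)) (a : Fin N) : List (Fin N) :=
  if l.head? = some a then l.tail else a :: l

/-- Run a sequence of steps on `T_N` starting from the origin (the empty word). -/
def regRun {N n : ℕ} (s : Fin n → Fin N) : List (Fin N) :=
  (List.ofFn s).foldl (regStep N) []

/-- The number of length-`n` non-lazy walks on the `N`-regular tree `T_N` that begin
and end at a fixed vertex. -/
def regReturningWalks (N n : ℕ) : ℕ :=
  (Finset.univ.filter fun s : Fin n → Fin N => regRun s = ([] : List (Fin N))).card

/-- Generating function `R(x)` for returning non-lazy walks on `T_N`. -/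
noncomputable def Rseries (N : ℕ) : PowerSeries ℝ :=
  PowerSeries.mk fun n => (regReturningWalks N n : ℝ)

/-- One non-lazy step on the rooted tree (each vertex with `m` children): `some a`
moves to the child `a`, `none` moves to the parent (invalid at the root). -/
def treeStep (m : ℕ) (l : List (Fin m)) : Option (Fin m) → Option (List (Fin m))
  | some a => some (a :: l)
  | none =>
    match l with
    | [] => none
    | _ :: t => some t

/-- Run a sequence of steps starting from the root. -/
def treeRun {m n : ℕ} (s : Fin n → Option (Fin m)) : Option (List (Fin m)) :=
  (List.ofFn s).foldl (fun o st => o.bind fun l => treeStep m l st) (some [])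

/-- Returning walks at the root of the rooted tree with `m` children per vertex. -/
def rootedReturningWalks (m n : ℕ) : ℕ :=
  (Finset.univ.filter fun s : Fin n → Option (Fin m) =>
    treeRun s = some ([] : List (Fin m))).card

/-- Generating function `B(x)` for returning walks on the rooted `(N-1)`-ary tree. -/
noncomputable def Bseries (N : ℕ) : PowerSeries ℝ :=
  PowerSeries.mk fun n => (rootedReturningWalks (N - 1) n : ℝ)

namespace TGF

variable {N : ℕ}

def rrun (N : ℕ) (w : List (Fin N)) (l : List (Fin N)) : List (Fin N) :=
  l.foldl (regStep N) w

def tstepF (m : ℕ) : Option (List (Fin m)) → Option (Fin m) → Option (List (Fin m)) :=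
  fun o st => o.bind fun l => treeStep m l st

def trun (m : ℕ) (o : Option (List (Fin m))) (t : List (Option (Fin m))) :
    Option (List (Fin m)) := t.foldl (tstepF m) o

@[simp] lemma rrun_nil (w : List (Fin N)) : rrun N w [] = w := rfl
@[simp] lemma rrun_cons (w : List (Fin N)) (d : Fin N) (l : List (Fin N)) :
    rrun N w (d :: l) = rrun N (regStep N w d) l := rfl
lemma rrun_append (w : List (Fin N)) (l₁ l₂ : List (Fin N)) :
    rrun N w (l₁ ++ l₂) = rrun N (rrun N w l₁) l₂ := List.foldl_append

variable {m : ℕ}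
@[simp] lemma trun_nil (o : Option (List (Fin m))) : trun m o [] = o := rfl
@[simp] lemma trun_cons (o : Option (List (Fin m))) (st : Option (Fin m)) (t) :
    trun m o (st :: t) = trun m (tstepF m o st) t := rfl
@[simp] lemma trun_none (t : List (Option (Fin m))) : trun m none t = none := by
  induction t with
  | nil => rfl
  | cons st t ih => simp [trun, tstepF] at ih ⊢; exact ih

lemma regStep_cancel (w : List (Fin N)) (d : Fin N) :
    regStep N (d :: w) d = w := by simp [regStep]

lemma regStep_prepend {w : List (Fin N)} {d : Fin N} (h : w.head? ≠ some d) :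
    regStep N w d = d :: w := by simp [regStep, h]

lemma regStep_eq_nil {w : List (Fin N)} {d : Fin N} (h : regStep N w d = []) :
    w = [d] := by
  unfold regStep at h
  split at h
  · rename_i hh
    cases w with
    | nil => simp at hh
    | cons x tl =>
      simp only [List.head?_cons, Option.some.injEq] at hh
      simp only [List.tail_cons] at h
      subst hh h; rfl
  · simp at h

/-- embedding of `Fin (N-1)` into `Fin N` avoiding `h` -/
def emb (h : Fin N) (c : Fin (N - 1)) : Fin N :=
  if hc : (c : ℕ) < (h : ℕ) then ⟨c, by have := h.isLt; omega⟩
  else ⟨(c : ℕ) + 1, by have := c.isLt; have := h.isLt; omega⟩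

def unemb (h d : Fin N) (hne : d ≠ h) : Fin (N - 1) :=
  if hd : (d : ℕ) < (h : ℕ) then ⟨d, by have := h.isLt; omega⟩
  else ⟨(d : ℕ) - 1, by
    have h1 : (d : ℕ) ≠ (h : ℕ) := fun hh => hne (Fin.ext hh)
    have := d.isLt; omega⟩

lemma emb_val (h : Fin N) (c : Fin (N-1)) :
    ((emb h c : Fin N) : ℕ) = if (c : ℕ) < (h : ℕ) then (c : ℕ) else (c : ℕ) + 1 := by
  unfold emb; split <;> simp

lemma unemb_val (h d : Fin N) (hne : d ≠ h) :
    ((unemb h d hne : Fin (N-1)) : ℕ) = if (d : ℕ) < (h : ℕ) then (d : ℕ) else (d : ℕ) - 1 := by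
  unfold unemb; split <;> simp

lemma emb_ne (h : Fin N) (c : Fin (N-1)) : emb h c ≠ h := by
  intro he
  have := emb_val h c
  rw [he] at this
  split at this <;> omega

lemma unemb_emb (h : Fin N) (c : Fin (N-1)) :
    unemb h (emb h c) (emb_ne h c) = c := by
  apply Fin.ext
  rw [unemb_val, emb_val]
  have := c.isLt
  split_ifs <;> omega

lemma emb_unemb (h d : Fin N) (hne : d ≠ h) :
    emb h (unemb h d hne) = d := by
  apply Fin.ext
  rw [emb_val, unemb_val]
  have h1 : (d : ℕ) ≠ (h : ℕ) := fun hh => hne (Fin.ext hh)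
  split_ifs <;> omega


/-- word in the branch corresponding to a tree vertex; returns (head, rest) -/
def phi (a : Fin N) : List (Fin (N - 1)) → Fin N × List (Fin N)
  | [] => (a, [])
  | c :: l => ((emb (phi a l).1 c), (phi a l).1 :: (phi a l).2)

def word (a : Fin N) (l : List (Fin (N - 1))) : List (Fin N) :=
  (phi a l).1 :: (phi a l).2

@[simp] lemma word_nil (a : Fin N) : word a [] = [a] := rfl

lemma word_cons (a : Fin N) (c : Fin (N-1)) (l : List (Fin (N-1))) :
    word a (c :: l) = emb (phi a l).1 c :: word a l := rfl

lemma word_length (a : Fin N) (l : List (Fin (N-1))) :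
    (word a l).length = l.length + 1 := by
  induction l with
  | nil => rfl
  | cons c l ih => rw [word_cons, List.length_cons, ih]; rfl

/-- encode a tree walk as branch steps; state (h, rest) is the word h::rest -/
def enc (h : Fin N) (rest : List (Fin N)) : List (Option (Fin (N - 1))) → List (Fin N)
  | [] => []
  | some c :: t => emb h c :: enc (emb h c) (h :: rest) t
  | none :: t =>
    h :: (match rest with
          | [] => []
          | h' :: r' => enc h' r' t)

def dec (h : Fin N) (rest : List (Fin N)) : List (Fin N) → List (Option (Fin (N - 1)))
  | [] => []
  | d :: s =>
    if hde : d = h then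
      none :: (match rest with
               | [] => []
               | h' :: r' => dec h' r' s)
    else some (unemb h d hde) :: dec d (h :: rest) s

lemma enc_run (a : Fin N) (t : List (Option (Fin (N-1)))) :
    ∀ (l l' : List (Fin (N-1))), trun (N-1) (some l) t = some l' →
    rrun N (word a l) (enc (phi a l).1 (phi a l).2 t) = word a l' := by
  induction t with
  | nil => intro l l' h; simp only [trun_nil, Option.some.injEq] at h; subst h; rfl
  | cons st t ih =>
    intro l l' h
    cases st with
    | some c =>
      have hstep : tstepF (N-1) (some l) (some c) = some (c :: l) := rfl
      rw [trun_cons, hstep] at h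
      have := ih (c :: l) l' h
      simp only [phi] at this
      rw [word_cons] at this
      show rrun N (word a l) (emb (phi a l).1 c :: enc (emb (phi a l).1 c) ((phi a l).1 :: (phi a l).2) t) = _
      rw [rrun_cons]
      rw [regStep_prepend (w := word a l)]
      · exact this
      · show ((phi a l).1 :: (phi a l).2).head? ≠ some (emb (phi a l).1 c)
        simp only [List.head?_cons, ne_eq, Option.some.injEq]
        exact fun hh => emb_ne _ _ hh.symm
    | none =>
      cases l with
      | nil =>
        have hstep : tstepF (N-1) (some ([] : List (Fin (N-1)))) none = none := rfl
        rw [trun_cons, hstep, trun_none] at h; exact absurd h (by simp)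
      | cons c l₂ =>
        have hstep : tstepF (N-1) (some (c :: l₂)) none = some l₂ := rfl
        rw [trun_cons, hstep] at h
        have := ih l₂ l' h
        show rrun N (word a (c :: l₂))
          ((phi a (c :: l₂)).1 :: enc (phi a l₂).1 (phi a l₂).2 t) = word a l'
        rw [rrun_cons]
        have hc : regStep N (word a (c :: l₂)) (phi a (c :: l₂)).1 = word a l₂ := by
          rw [word_cons]
          exact regStep_cancel _ _
        rw [hc]; exact this


lemma trun_append {m : ℕ} (o : Option (List (Fin m))) (t₁ t₂ : List (Option (Fin m))) :
    trun m o (t₁ ++ t₂) = trun m (trun m o t₁) t₂ := List.foldl_append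

lemma dec_cons (h : Fin N) (rest : List (Fin N)) (d : Fin N) (s : List (Fin N)) :
    dec h rest (d :: s) = if hde : d = h then
      none :: (match rest with | [] => [] | h' :: r' => dec h' r' s)
    else some (unemb h d hde) :: dec d (h :: rest) s := rfl

lemma enc_take (h : Fin N) (rest : List (Fin N)) :
    ∀ (t : List (Option (Fin (N-1)))) (j : ℕ),
      enc h rest (t.take j) = (enc h rest t).take j := by
  intro t
  induction t generalizing h rest with
  | nil => intro j; cases j <;> rfl
  | cons st t ih =>
    intro j
    cases j with
    | zero => rfl
    | succ j =>
      cases st with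
      | some c =>
        show emb h c :: enc (emb h c) (h :: rest) (t.take j) = _
        rw [ih]; rfl
      | none =>
        cases rest with
        | nil =>
          show ([h] : List (Fin N)) = List.take (j+1) (enc h [] (none :: t))
          show ([h] : List (Fin N)) = List.take (j+1) [h]
          simp
        | cons h' r' =>
          show h :: enc h' r' (t.take j) = _
          rw [ih]; rfl

lemma trun_prefix {m : ℕ} {l l' : List (Fin m)} {t : List (Option (Fin m))}
    (h : trun m (some l) t = some l') (j : ℕ) :
    ∃ lj, trun m (some l) (t.take j) = some lj := by
  cases ho : trun m (some l) (t.take j) with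
  | none =>
    exfalso
    have h2 : trun m (some l) (t.take j ++ t.drop j) = some l' := by
      rw [List.take_append_drop]; exact h
    rw [trun_append, ho, trun_none] at h2
    exact absurd h2 (by simp)
  | some lj => exact ⟨lj, rfl⟩

lemma enc_good (a : Fin N) {t : List (Option (Fin (N-1)))} {l l' : List (Fin (N-1))}
    (h : trun (N-1) (some l) t = some l') (j : ℕ) :
    rrun N (word a l) ((enc (phi a l).1 (phi a l).2 t).take j) ≠ [] := by
  obtain ⟨lj, hj⟩ := trun_prefix h j
  rw [← enc_take, enc_run a _ _ _ hj]
  exact List.cons_ne_nil _ _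

lemma enc_length (a : Fin N) (t : List (Option (Fin (N-1)))) :
    ∀ (l l' : List (Fin (N-1))), trun (N-1) (some l) t = some l' →
    (enc (phi a l).1 (phi a l).2 t).length = t.length := by
  induction t with
  | nil => intro l l' _; rfl
  | cons st t ih =>
    intro l l' h
    cases st with
    | some c =>
      have hstep : tstepF (N-1) (some l) (some c) = some (c :: l) := rfl
      rw [trun_cons, hstep] at h
      have := ih (c :: l) l' h
      simp only [phi] at this
      show (emb (phi a l).1 c :: enc (emb (phi a l).1 c) ((phi a l).1 :: (phi a l).2) t).length = _
      rw [List.length_cons, this, List.length_cons]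
    | none =>
      cases l with
      | nil =>
        have hstep : tstepF (N-1) (some ([] : List (Fin (N-1)))) none = none := rfl
        rw [trun_cons, hstep, trun_none] at h; exact absurd h (by simp)
      | cons c l₂ =>
        have hstep : tstepF (N-1) (some (c :: l₂)) none = some l₂ := rfl
        rw [trun_cons, hstep] at h
        have := ih l₂ l' h
        show ((phi a (c :: l₂)).1 :: enc (phi a l₂).1 (phi a l₂).2 t).length = _
        rw [List.length_cons, this, List.length_cons]

lemma dec_enc (a : Fin N) (t : List (Option (Fin (N-1)))) :
    ∀ (l l' : List (Fin (N-1))), trun (N-1) (some l) t = some l' →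
    dec (phi a l).1 (phi a l).2 (enc (phi a l).1 (phi a l).2 t) = t := by
  induction t with
  | nil => intro l l' _; rfl
  | cons st t ih =>
    intro l l' h
    cases st with
    | some c =>
      have hstep : tstepF (N-1) (some l) (some c) = some (c :: l) := rfl
      rw [trun_cons, hstep] at h
      have := ih (c :: l) l' h
      simp only [phi] at this
      show dec (phi a l).1 (phi a l).2
        (emb (phi a l).1 c :: enc (emb (phi a l).1 c) ((phi a l).1 :: (phi a l).2) t) = _
      rw [dec_cons, dif_neg (emb_ne (phi a l).1 c)]
      rw [this, unemb_emb]
    | none =>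
      cases l with
      | nil =>
        have hstep : tstepF (N-1) (some ([] : List (Fin (N-1)))) none = none := rfl
        rw [trun_cons, hstep, trun_none] at h; exact absurd h (by simp)
      | cons c l₂ =>
        have hstep : tstepF (N-1) (some (c :: l₂)) none = some l₂ := rfl
        rw [trun_cons, hstep] at h
        have := ih l₂ l' h
        show dec (phi a (c :: l₂)).1 (phi a (c :: l₂)).2
          ((phi a (c :: l₂)).1 :: enc (phi a l₂).1 (phi a l₂).2 t) = _
        rw [dec_cons, dif_pos rfl]
        show (none :: dec (phi a l₂).1 (phi a l₂).2 (enc (phi a l₂).1 (phi a l₂).2 t) :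
          List (Option (Fin (N-1)))) = _
        rw [this]


lemma dec_master (a : Fin N) : ∀ (e : List (Fin N)) (l : List (Fin (N-1))),
    (∀ j, j ≤ e.length → rrun N (word a l) (e.take j) ≠ []) →
    ∃ l', trun (N-1) (some l) (dec (phi a l).1 (phi a l).2 e) = some l'
      ∧ rrun N (word a l) e = word a l'
      ∧ enc (phi a l).1 (phi a l).2 (dec (phi a l).1 (phi a l).2 e) = e := by
  intro e
  induction e with
  | nil => intro l _; exact ⟨l, rfl, rfl, rfl⟩
  | cons d e' ih =>
    intro l hgood
    by_cases hde : d = (phi a l).1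
    · -- cancellation step: l must be nonempty
      cases l with
      | nil =>
        exfalso
        apply hgood 1 (by simp)
        show regStep N [a] d = []
        rw [hde]
        show regStep N [a] a = []
        simp [regStep]
      | cons c l₂ =>
        have hcancel : regStep N (word a (c :: l₂)) d = word a l₂ := by
          rw [word_cons]
          subst hde
          exact regStep_cancel _ _
        have hgood₂ : ∀ j, j ≤ e'.length → rrun N (word a l₂) (e'.take j) ≠ [] := by
          intro j hj
          have := hgood (j+1) (by simpa using Nat.succ_le_succ hj)
          rw [List.take_succ_cons, rrun_cons, hcancel] at this
          exact this
        obtain ⟨l', h1, h2, h3⟩ := ih l₂ hgood₂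
        refine ⟨l', ?_, ?_, ?_⟩
        · rw [dec_cons, dif_pos hde]
          show trun (N-1) (some (c :: l₂))
            (none :: dec (phi a l₂).1 (phi a l₂).2 e') = some l'
          rw [trun_cons]
          show trun (N-1) (some l₂) (dec (phi a l₂).1 (phi a l₂).2 e') = some l'
          exact h1
        · rw [rrun_cons, hcancel]; exact h2
        · rw [dec_cons, dif_pos hde]
          show enc (phi a (c :: l₂)).1 (phi a (c :: l₂)).2
            (none :: dec (phi a l₂).1 (phi a l₂).2 e') = d :: e'
          show (phi a (c :: l₂)).1 :: enc (phi a l₂).1 (phi a l₂).2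
            (dec (phi a l₂).1 (phi a l₂).2 e') = d :: e'
          rw [h3, hde]
    · -- prepend step
      have hprep : regStep N (word a l) d = d :: word a l := by
        apply regStep_prepend
        show ((phi a l).1 :: (phi a l).2).head? ≠ some d
        simp only [List.head?_cons, ne_eq, Option.some.injEq]
        exact fun hh => hde hh.symm
      have hword : word a (unemb (phi a l).1 d hde :: l) = d :: word a l := by
        rw [word_cons, emb_unemb]
      have hgood₂ : ∀ j, j ≤ e'.length →
          rrun N (word a (unemb (phi a l).1 d hde :: l)) (e'.take j) ≠ [] := by
        intro j hj
        have := hgood (j+1) (by simpa using Nat.succ_le_succ hj)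
        rw [List.take_succ_cons, rrun_cons, hprep] at this
        rw [hword]
        exact this
      obtain ⟨l', h1, h2, h3⟩ := ih (unemb (phi a l).1 d hde :: l) hgood₂
      have hphi1 : (phi a (unemb (phi a l).1 d hde :: l)).1 = d := by
        show emb (phi a l).1 (unemb (phi a l).1 d hde) = d
        exact emb_unemb _ _ _
      have hphi2 : (phi a (unemb (phi a l).1 d hde :: l)).2 = (phi a l).1 :: (phi a l).2 := rfl
      rw [hphi1, hphi2] at h1 h3
      refine ⟨l', ?_, ?_, ?_⟩
      · rw [dec_cons, dif_neg hde, trun_cons]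
        show trun (N-1) (some (unemb (phi a l).1 d hde :: l))
          (dec d ((phi a l).1 :: (phi a l).2) e') = some l'
        exact h1
      · rw [rrun_cons, hprep, ← hword, h2]
      · rw [dec_cons, dif_neg hde]
        show emb (phi a l).1 (unemb (phi a l).1 d hde) ::
          enc (emb (phi a l).1 (unemb (phi a l).1 d hde)) ((phi a l).1 :: (phi a l).2)
            (dec d ((phi a l).1 :: (phi a l).2) e') = d :: e'
        rw [emb_unemb, h3]


lemma rrun_getLast? (a : Fin N) : ∀ (e w : List (Fin N)), w ≠ [] →
    w.getLast? = some a →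
    (∀ j, j ≤ e.length → rrun N w (e.take j) ≠ []) →
    (rrun N w e).getLast? = some a := by
  intro e
  induction e with
  | nil => intro w _ hlast _; exact hlast
  | cons x e' ih =>
    intro w hw hlast hgood
    have hw' : regStep N w x ≠ [] := by
      have := hgood 1 (by simp)
      simpa using this
    have hlast' : (regStep N w x).getLast? = some a := by
      by_cases h : w.head? = some x
      · rw [regStep, if_pos h] at hw' ⊢
        cases w with
        | nil => exact absurd rfl hw
        | cons y tl =>
          simp only [List.tail_cons] at hw' ⊢
          cases tl with
          | nil => exact absurd rfl hw'
          | cons z tl' => rw [List.getLast?_cons_cons] at hlast; exact hlast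
      · rw [regStep_prepend h]
        cases w with
        | nil => exact absurd rfl hw
        | cons y tl => rw [List.getLast?_cons_cons]; exact hlast
    refine ih (regStep N w x) hw' hlast' ?_
    intro j hj
    have := hgood (j+1) (by simpa using Nat.succ_le_succ hj)
    rwa [List.take_succ_cons, rrun_cons] at this

def RW (N n : ℕ) := {l : List (Fin N) // l.length = n ∧ rrun N [] l = []}

def TW (m i : ℕ) :=
  {t : List (Option (Fin m)) // t.length = i ∧ trun m (some []) t = some []}

def EW (N : ℕ) (a : Fin N) (i : ℕ) :=
  {e : List (Fin N) // e.length = i ∧ (∀ j, j ≤ i → rrun N [a] (e.take j) ≠ []) ∧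
    rrun N [a] e = [a]}

def excEquiv (a : Fin N) (i : ℕ) : EW N a i ≃ TW (N-1) i where
  toFun e := ⟨dec a [] e.1, by
    obtain ⟨hlen, hgood, hret⟩ := e.2
    obtain ⟨l', h1, h2, h3⟩ := dec_master a e.1 [] (fun j hj => hgood j (hlen ▸ hj))
    constructor
    · have hl := enc_length a (dec (phi a []).1 (phi a []).2 e.1) [] l' h1
      rw [h3] at hl
      exact hl.symm.trans hlen
    · have hw : word a l' = [a] := by rw [← h2]; exact hret
      have hl' : l' = [] := by
        have hc := congrArg List.length hw
        rw [word_length] at hc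
        simpa using hc
      rw [hl'] at h1
      exact h1⟩
  invFun t := ⟨enc a [] t.1, by
    obtain ⟨hlen, hret⟩ := t.2
    refine ⟨(enc_length a t.1 [] [] hret).trans hlen, fun j _ => enc_good a hret j,
      enc_run a t.1 [] [] hret⟩⟩
  left_inv := by
    rintro ⟨e, hlen, hgood, hret⟩
    apply Subtype.ext
    obtain ⟨l', h1, h2, h3⟩ := dec_master a e [] (fun j hj => hgood j (hlen ▸ hj))
    exact h3
  right_inv := by
    rintro ⟨t, hlen, hret⟩
    apply Subtype.ext
    exact dec_enc a t [] [] hret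

lemma regStep_nil (a : Fin N) : regStep N [] a = [a] := by simp [regStep]

lemma regStep_single (a : Fin N) : regStep N [a] a = [] := by simp [regStep]

def gmap (N n : ℕ) : (Σ _a : Fin N, Σ k : Fin (n+1), EW N _a k × RW N (n - k)) → RW N (n+2) :=
  fun x =>
    match x with
    | ⟨a, k, e, q⟩ => ⟨a :: (e.1 ++ a :: q.1), by
        obtain ⟨he1, he2, he3⟩ := e.2
        obtain ⟨hq1, hq2⟩ := q.2
        constructor
        · have := k.isLt
          simp only [List.length_cons, List.length_append, he1, hq1]
          omega
        · rw [rrun_cons, regStep_nil, rrun_append, he3, rrun_cons, regStep_single]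
          exact hq2⟩

lemma firstret (a : Fin N) {e q : List (Fin N)}
    (hgood : ∀ j, j ≤ e.length → rrun N [a] (e.take j) ≠ [])
    (hret : rrun N [a] e = [a]) :
    rrun N [a] ((e ++ a :: q).take (e.length + 1)) = [] ∧
    ∀ j, j < e.length + 1 → rrun N [a] ((e ++ a :: q).take j) ≠ [] := by
  constructor
  · rw [List.take_append, List.take_of_length_le (by omega),
      show e.length + 1 - e.length = 1 from by omega,
      show List.take 1 (a :: q) = [a] from rfl, rrun_append, hret]
    show regStep N [a] a = []
    exact regStep_single a
  · intro j hj
    rw [List.take_append, show j - e.length = 0 from by omega,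
      List.take_zero, List.append_nil]
    exact hgood j (by omega)


lemma gmap_injective (N n : ℕ) : Function.Injective (gmap N n) := by
  rintro ⟨a, k, ⟨e, he1, he2, he3⟩, ⟨q, hq1, hq2⟩⟩ ⟨a', k', ⟨e', he1', he2', he3'⟩, ⟨q', hq1', hq2'⟩⟩ h
  replace h := congrArg Subtype.val h
  simp only [gmap, List.cons.injEq] at h
  obtain ⟨ha, hrest⟩ := h
  subst ha
  have hge : ∀ j, j ≤ e.length → rrun N [a] (e.take j) ≠ [] := by
    intro j hj; exact he2 j (he1 ▸ hj)
  have hge' : ∀ j, j ≤ e'.length → rrun N [a] (e'.take j) ≠ [] := by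
    intro j hj; exact he2' j (he1' ▸ hj)
  have hlen : e.length = e'.length := by
    rcases Nat.lt_trichotomy e.length e'.length with hlt | heq | hgt
    · exfalso
      refine (firstret a (q := q') hge' he3').2 (e.length + 1) (by omega) ?_
      rw [← hrest]
      exact (firstret a hge he3).1
    · exact heq
    · exfalso
      refine (firstret a (q := q) hge he3).2 (e'.length + 1) (by omega) ?_
      rw [hrest]
      exact (firstret a hge' he3').1
  obtain ⟨hee, htt⟩ := List.append_inj hrest hlen
  subst hee
  have hqq : q = q' := by simpa using htt
  subst hqq
  have hkk : k = k' := Fin.ext (by rw [← he1, ← he1'])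
  subst hkk
  rfl

lemma gmap_surjective (N n : ℕ) : Function.Surjective (gmap N n) := by
  rintro ⟨l, hlen, hrun⟩
  cases l with
  | nil => simp at hlen
  | cons a rest =>
    rw [rrun_cons, regStep_nil] at hrun
    have hlr : rest.length = n + 1 := by simpa using hlen
    have hex : ∃ j, rrun N [a] (rest.take j) = [] :=
      ⟨n + 1, by rw [List.take_of_length_le (by omega)]; exact hrun⟩
    have hspec := Nat.find_spec hex
    have hmin : ∀ j, j < Nat.find hex → rrun N [a] (rest.take j) ≠ [] :=
      fun j hj => Nat.find_min hex hj
    have hpos : 0 < Nat.find hex := by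
      rcases Nat.eq_zero_or_pos (Nat.find hex) with h | h
    
      · exfalso; rw [h] at hspec; simp at hspec
      · exact h
    have hle : Nat.find hex ≤ n + 1 :=
      Nat.find_min' hex (by rw [List.take_of_length_le (by omega)]; exact hrun)
    have hidx : Nat.find hex - 1 < rest.length := by omega
    have htk : rest.take (Nat.find hex) =
        rest.take (Nat.find hex - 1) ++ [rest.get ⟨Nat.find hex - 1, hidx⟩] := by
      have hc := List.take_concat_get hidx
      rw [List.concat_eq_append, show Nat.find hex - 1 + 1 = Nat.find hex from by omega] at hc
      exact hc.symm
    have hrune : rrun N [a] (rest.take (Nat.find hex - 1)) =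
        [rest.get ⟨Nat.find hex - 1, hidx⟩] := by
      apply regStep_eq_nil
      have h5 : rrun N [a] (rest.take (Nat.find hex)) = [] := hspec
      rw [htk, rrun_append] at h5
      exact h5
    have hel : (rest.take (Nat.find hex - 1)).length = Nat.find hex - 1 := by
      rw [List.length_take]; omega
    have hgood : ∀ j, j ≤ Nat.find hex - 1 →
        rrun N [a] ((rest.take (Nat.find hex - 1)).take j) ≠ [] := by
      intro j hj
      rw [List.take_take, min_eq_left hj]
      exact hmin j (by omega)
    have hda : rest.get ⟨Nat.find hex - 1, hidx⟩ = a := by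
      have hg := rrun_getLast? a (rest.take (Nat.find hex - 1)) [a] (by simp) (by simp)
        (fun j hj => hgood j (by omega))
      rw [hrune] at hg
      simpa using hg
    have h6 : rrun N [a] (rest.take (Nat.find hex) ++ rest.drop (Nat.find hex)) = [] := by
      rw [List.take_append_drop]; exact hrun
    rw [rrun_append, hspec] at h6
    refine ⟨⟨a, ⟨Nat.find hex - 1, by omega⟩, ⟨rest.take (Nat.find hex - 1),
      hel, hgood, by rw [hrune, hda]⟩,
      ⟨rest.drop (Nat.find hex), by
        show (rest.drop (Nat.find hex)).length = n - (Nat.find hex - 1)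
        rw [List.length_drop]; omega, h6⟩⟩, ?_⟩
    apply Subtype.ext
    show a :: (rest.take (Nat.find hex - 1) ++ a :: rest.drop (Nat.find hex)) = a :: rest
    rw [hda] at htk
    rw [show rest.take (Nat.find hex - 1) ++ a :: rest.drop (Nat.find hex)
        = (rest.take (Nat.find hex - 1) ++ [a]) ++ rest.drop (Nat.find hex) from by
      rw [List.append_assoc]; rfl]
    rw [← htk, List.take_append_drop]


lemma ofFn_get_cast {α : Type*} (l : List α) (n : ℕ) (h : l.length = n) :
    List.ofFn (fun i : Fin n => l.get (Fin.cast h.symm i)) = l := by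
  subst h
  simp only [Fin.cast_refl]
  exact List.ofFn_get l

def foldEquiv {α : Type*} (P : List α → Prop) (n : ℕ) :
    {s : Fin n → α // P (List.ofFn s)} ≃ {l : List α // l.length = n ∧ P l} where
  toFun s := ⟨List.ofFn s.1, List.length_ofFn, s.2⟩
  invFun l := ⟨fun i => l.1.get (Fin.cast l.2.1.symm i), by
    rw [ofFn_get_cast l.1 n l.2.1]; exact l.2.2⟩
  left_inv s := by
    apply Subtype.ext
    funext i
    simp [List.get_ofFn]
  right_inv l := by
    apply Subtype.ext
    exact ofFn_get_cast l.1 n l.2.1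

instance (N n : ℕ) : Fintype (RW N n) :=
  Fintype.ofEquiv _ (foldEquiv (fun l : List (Fin N) => rrun N [] l = []) n)

instance (m i : ℕ) : Fintype (TW m i) :=
  Fintype.ofEquiv _ (foldEquiv (fun t : List (Option (Fin m)) => trun m (some []) t = some []) i)

instance (N : ℕ) (a : Fin N) (i : ℕ) : Fintype (EW N a i) :=
  Fintype.ofEquiv _ (excEquiv a i).symm

lemma hRW (N m : ℕ) : Nat.card (RW N m) = regReturningWalks N m := by
  rw [regReturningWalks, ← Fintype.card_subtype, ← Nat.card_eq_fintype_card]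
  exact Nat.card_congr (((foldEquiv (fun l : List (Fin N) => rrun N [] l = []) m).symm).trans
    (Equiv.subtypeEquivRight (fun s => Iff.rfl)))

lemma hTW (m i : ℕ) : Nat.card (TW m i) = rootedReturningWalks m i := by
  rw [rootedReturningWalks, ← Fintype.card_subtype, ← Nat.card_eq_fintype_card]
  exact Nat.card_congr (((foldEquiv
    (fun t : List (Option (Fin m)) => trun m (some []) t = some []) i).symm).trans
    (Equiv.subtypeEquivRight (fun s => Iff.rfl)))

lemma hEW (N : ℕ) (a : Fin N) (i : ℕ) :
    Nat.card (EW N a i) = rootedReturningWalks (N-1) i := by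
  rw [Nat.card_congr (excEquiv a i)]
  exact hTW (N-1) i

lemma count_rec (N n : ℕ) :
    regReturningWalks N (n+2) = N * ∑ k ∈ Finset.range (n+1),
      rootedReturningWalks (N-1) k * regReturningWalks N (n-k) := by
  rw [← hRW N (n+2),
    Nat.card_congr (Equiv.ofBijective (gmap N n)
      ⟨gmap_injective N n, gmap_surjective N n⟩).symm]
  rw [Nat.card_eq_fintype_card, Fintype.card_sigma]
  have hin : ∀ a : Fin N, Fintype.card (Σ k : Fin (n+1), EW N a k × RW N (n - k)) =
      ∑ k ∈ Finset.range (n+1), rootedReturningWalks (N-1) k * regReturningWalks N (n-k) := by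
    intro a
    rw [Fintype.card_sigma,
      ← Fin.sum_univ_eq_sum_range (fun k => rootedReturningWalks (N-1) k * regReturningWalks N (n-k)) (n+1)]
    refine Finset.sum_congr rfl (fun k _ => ?_)
    rw [Fintype.card_prod, ← hEW N a k, ← hRW N (n - k),
      Nat.card_eq_fintype_card, Nat.card_eq_fintype_card]
  rw [Finset.sum_congr rfl (fun a _ => hin a), Finset.sum_const, Finset.card_univ,
    Fintype.card_fin, smul_eq_mul]

lemma reg_zero (N : ℕ) : regReturningWalks N 0 = 1 := by
  rw [regReturningWalks]
  have h0 : ∀ s : Fin 0 → Fin N, regRun s = [] := fun s => by simp [regRun]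
  rw [Finset.filter_true_of_mem (fun s _ => h0 s), Finset.card_univ]
  simp

lemma reg_one (N : ℕ) : regReturningWalks N 1 = 0 := by
  rw [regReturningWalks, Finset.card_eq_zero, Finset.filter_eq_empty_iff]
  intro s _
  show regRun s ≠ []
  have : regRun s = [s 0] := by
    show (List.ofFn s).foldl (regStep N) [] = [s 0]
    rw [show List.ofFn s = [s 0] from by simp [List.ofFn_succ]]
    show regStep N [] (s 0) = [s 0]
    exact regStep_nil (s 0)
  rw [this]
  simp


lemma count_rec' (N n : ℕ) :
    regReturningWalks N (n+2) = N * ∑ k ∈ Finset.range (n+1),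
      regReturningWalks N k * rootedReturningWalks (N-1) (n-k) := by
  rw [count_rec]
  congr 1
  rw [← Finset.sum_range_reflect
    (fun k => regReturningWalks N k * rootedReturningWalks (N-1) (n-k)) (n+1)]
  refine Finset.sum_congr rfl (fun j hj => ?_)
  rw [Finset.mem_range] at hj
  rw [show n + 1 - 1 - j = n - j from by omega, show n - (n - j) = j from by omega,
    mul_comm]

end TGF

lemma coeffR (N n : ℕ) : (PowerSeries.coeff (R := ℝ) n) (Rseries N) = (regReturningWalks N n : ℝ) := by
  rw [Rseries]; exact PowerSeries.coeff_mk _ _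

lemma coeffB (N n : ℕ) : (PowerSeries.coeff (R := ℝ) n) (Bseries N) = (rootedReturningWalks (N-1) n : ℝ) := by
  rw [Bseries]; exact PowerSeries.coeff_mk _ _

/-- `R(x)` satisfies `R = 1 + N x² R B` as formal power series, and consequently the
closed form `R(x) = (2 + N(√(1-(γx)²) - 1))/(2(1-(Nx)²))` with `γ = 2√(N-1)`
satisfies the functional equation together with the closed form of `B`. -/
theorem regular_tree_generating_function (N : ℕ) (hN : 3 ≤ N) :
    Rseries N = 1 + (N : ℝ) • (PowerSeries.X ^ 2 * Rseries N * Bseries N) ∧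
    (∀ x : ℝ, x ≠ 0 → (2 * Real.sqrt ((N : ℝ) - 1) * x) ^ 2 ≤ 1 →
      ((N : ℝ) * x) ^ 2 ≠ 1 →
      (2 + (N : ℝ) * (Real.sqrt (1 - (2 * Real.sqrt ((N : ℝ) - 1) * x) ^ 2) - 1))
          / (2 * (1 - ((N : ℝ) * x) ^ 2))
        = 1 + (N : ℝ) * x ^ 2 *
            ((2 + (N : ℝ) * (Real.sqrt (1 - (2 * Real.sqrt ((N : ℝ) - 1) * x) ^ 2) - 1))
              / (2 * (1 - ((N : ℝ) * x) ^ 2))) *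
            (2 * (1 - Real.sqrt (1 - (2 * Real.sqrt ((N : ℝ) - 1) * x) ^ 2))
              / (2 * Real.sqrt ((N : ℝ) - 1) * x) ^ 2)) := by
  constructor
  · ext n
    rw [map_add, PowerSeries.coeff_one, PowerSeries.coeff_smul, mul_assoc]
    match n with
    | 0 =>
      rw [if_pos rfl]
      have h2 : (PowerSeries.coeff (R := ℝ) 0) (PowerSeries.X ^ 2 * (Rseries N * Bseries N)) = 0 := by
        simp [PowerSeries.coeff_mul, PowerSeries.coeff_X_pow]
      rw [h2, smul_zero, add_zero, coeffR, TGF.reg_zero]; norm_num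
    | 1 =>
      rw [if_neg (by omega)]
      have h2 : (PowerSeries.coeff (R := ℝ) 1) (PowerSeries.X ^ 2 * (Rseries N * Bseries N)) = 0 := by
        simp [PowerSeries.coeff_mul, PowerSeries.coeff_X_pow, Finset.Nat.antidiagonal_succ]
      rw [h2, smul_zero, add_zero, coeffR, TGF.reg_one]; norm_num
    | (n+2) =>
      rw [PowerSeries.coeff_X_pow_mul, if_neg (by omega), PowerSeries.coeff_mul, coeffR]
      simp only [coeffR, coeffB]
      rw [Finset.Nat.sum_antidiagonal_eq_sum_range_succ_mk, zero_add, smul_eq_mul,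
        TGF.count_rec' N n]
      push_cast
      rfl
  · intro x hx hle hne
    have hN3 : (3:ℝ) ≤ (N:ℝ) := by exact_mod_cast hN
    have hN1 : (0:ℝ) < (N:ℝ) - 1 := by linarith
    set s := Real.sqrt (1 - (2 * Real.sqrt ((N : ℝ) - 1) * x) ^ 2) with hs
    have hsq : Real.sqrt ((N:ℝ) - 1) ^ 2 = (N:ℝ) - 1 := Real.sq_sqrt (le_of_lt hN1)
    have hs2 : s ^ 2 = 1 - (2 * Real.sqrt ((N : ℝ) - 1) * x) ^ 2 :=
      Real.sq_sqrt (by linarith)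
    have hs2' : s ^ 2 = 1 - 4 * ((N:ℝ)-1) * x ^ 2 := by
      rw [hs2, mul_pow, mul_pow, hsq]; ring
    have hd1 : 2 * (1 - ((N:ℝ) * x) ^ 2) ≠ 0 := by
      intro h; exact hne (by linarith)
    have hd2 : (2 * Real.sqrt ((N : ℝ) - 1) * x) ^ 2 ≠ 0 := by
      have := Real.sqrt_pos.mpr hN1
      positivity
    have h1s : (0:ℝ) < 1 + s := by
      have : 0 ≤ s := Real.sqrt_nonneg _
      linarith
    have hB : 2 * (1 - s) / (2 * Real.sqrt ((N : ℝ) - 1) * x) ^ 2 = 2 / (1 + s) := by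
      rw [div_eq_div_iff hd2 (ne_of_gt h1s)]
      linarith [hs2, sq_nonneg s]
    rw [hB]
    field_simp [show 1 - (N:ℝ)^2*x^2 ≠ 0 from fun h => hd1 (by rw [mul_pow, h]; ring)]
    linear_combination (N:ℝ) * hs2'
end

section
/- For even L, the number of length-L non-lazy walks on the N-regular tree T_N that begin and end at a fixed vertex equals N^L (1 + (1/2)∑_{n=1}^{L/2} N^{-2n+1} binomial(1/2, n) (-1)^n γ^{2n}) where γ = 2√(N-1). -/
/-- The generalized binomial coefficient `binomial(r, n)` for real `r`. -/
noncomputable def genChoose (r : ℝ) (n : ℕ) : ℝ :=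
  (∏ i ∈ Finset.range n, (r - i)) / n.factorial

/-- Recursively-defined count of walk words from distance `d` to the origin. -/
def regCount (N : ℕ) : ℕ → ℕ → ℕ
  | 0, d => if d = 0 then 1 else 0
  | n+1, 0 => N * regCount N n 1
  | n+1, (d+1) => regCount N n d + (N-1) * regCount N n (d+2)

lemma regStep_nil (N : ℕ) (a : Fin N) : regStep N [] a = [a] := by
  simp [regStep]

lemma regStep_cons (N : ℕ) (b : Fin N) (t : List (Fin N)) (a : Fin N) :
    regStep N (b :: t) a = if a = b then t else a :: b :: t := by
  simp [regStep, eq_comm]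

lemma walk_card (N : ℕ) : ∀ (n : ℕ) (l : List (Fin N)),
    (Finset.univ.filter fun s : Fin n → Fin N =>
      (List.ofFn s).foldl (regStep N) l = []).card = regCount N n l.length := by
  intro n
  induction n with
  | zero =>
    intro l
    cases l with
    | nil => simp [regCount]
    | cons b t => simp [regCount]
  | succ n ih =>
    intro l
    have key : (Finset.univ.filter fun s : Fin (n+1) → Fin N =>
        (List.ofFn s).foldl (regStep N) l = []).card
        = ∑ a : Fin N, regCount N n (regStep N l a).length := by
      calc (Finset.univ.filter fun s : Fin (n+1) → Fin N =>
            (List.ofFn s).foldl (regStep N) l = []).card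
          = ∑ s : Fin (n+1) → Fin N,
              if (List.ofFn s).foldl (regStep N) l = [] then 1 else 0 :=
            Finset.card_filter _ _
        _ = ∑ p : Fin N × (Fin n → Fin N),
              if (List.ofFn p.2).foldl (regStep N) (regStep N l p.1) = [] then 1 else 0 :=
            Fintype.sum_equiv (Fin.consEquiv fun _ => Fin N).symm _ _ (by
              intro s
              rw [List.ofFn_succ, List.foldl_cons]
              rfl)
        _ = ∑ a : Fin N, ∑ t : Fin n → Fin N,
              if (List.ofFn t).foldl (regStep N) (regStep N l a) = [] then 1 else 0 :=
            Fintype.sum_prod_type _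
        _ = ∑ a : Fin N, regCount N n (regStep N l a).length := by
            refine Finset.sum_congr rfl fun a _ => ?_
            rw [← ih (regStep N l a), Finset.card_filter]
    rw [key]
    cases l with
    | nil =>
      simp only [regStep_nil, List.length_cons, List.length_nil]
      simp [regCount, Finset.sum_const, mul_comm]
    | cons b t =>
      have hlen : ∀ a : Fin N, (regStep N (b :: t) a).length
          = if a = b then t.length else t.length + 2 := by
        intro a
        rw [regStep_cons]
        split <;> simp
      calc ∑ a : Fin N, regCount N n (regStep N (b :: t) a).length
          = ∑ a : Fin N, (if a = b then regCount N n t.length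
              else regCount N n (t.length + 2)) := by
            refine Finset.sum_congr rfl fun a _ => ?_
            rw [hlen]; split <;> rfl
        _ = regCount N n t.length + (N-1) * regCount N n (t.length + 2) := by
            rw [Finset.sum_ite, Finset.filter_eq', Finset.filter_ne']
            simp [Finset.card_erase_of_mem, Finset.mem_univ, mul_comm]
        _ = regCount N (n+1) (b :: t).length := by simp [regCount]

lemma regReturningWalks_eq (N n : ℕ) : regReturningWalks N n = regCount N n 0 := by
  have := walk_card N n []
  unfold regReturningWalks regRun
  exact this

open PowerSeries Finset

noncomputable section

/-- Generating function of `catalan n * c^n`. -/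
def catGF (c : ℝ) : PowerSeries ℝ := PowerSeries.mk fun n => (catalan n : ℝ) * c ^ n

lemma coeff_catGF (c : ℝ) (n : ℕ) : (coeff (R := ℝ) n) (catGF c) = (catalan n : ℝ) * c ^ n := by
  simp [catGF]

lemma catGF_eq (c : ℝ) : catGF c = 1 + C (R := ℝ) c * X * (catGF c) ^ 2 := by
  ext n
  cases n with
  | zero => simp [catGF, coeff_zero_eq_constantCoeff]
  | succ n =>
    rw [map_add, coeff_catGF]
    have h1 : (coeff (R := ℝ) (n+1)) (1 : PowerSeries ℝ) = 0 := by
      simp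
    have h2 : (coeff (R := ℝ) (n+1)) (C (R := ℝ) c * X * catGF c ^ 2)
        = c * (coeff (R := ℝ) n) (catGF c ^ 2) := by
      rw [mul_assoc, coeff_C_mul, coeff_succ_X_mul]
    rw [h1, h2, zero_add, sq, coeff_mul]
    rw [catalan_succ' n]
    push_cast
    rw [Finset.mul_sum, Finset.sum_mul]
    refine Finset.sum_congr rfl fun p hp => ?_
    rw [Finset.HasAntidiagonal.mem_antidiagonal] at hp
    rw [coeff_catGF, coeff_catGF]
    rw [← hp]
    ring

/-- Coefficients of the walk generating function (half grading). -/
def aseq (N : ℕ) : ℕ → ℝ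
  | 0 => 1
  | (m+1) => N * ∑ i ∈ Finset.range (m+1),
      ((catalan i : ℝ) * ((N:ℝ)-1) ^ i) * aseq N (m - i)
  decreasing_by exact Nat.lt_succ_of_le (Nat.sub_le m i)

def walkGF (N : ℕ) : PowerSeries ℝ := PowerSeries.mk (aseq N)

lemma walkGF_eq (N : ℕ) :
    walkGF N = 1 + C (R := ℝ) N * X * (catGF ((N:ℝ)-1) * walkGF N) := by
  ext n
  cases n with
  | zero => simp [walkGF, aseq, coeff_zero_eq_constantCoeff]
  | succ n =>
    rw [map_add]
    have h1 : (coeff (R := ℝ) (n+1)) (1 : PowerSeries ℝ) = 0 := by simp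
    rw [h1, zero_add, mul_assoc, coeff_C_mul, coeff_succ_X_mul, coeff_mul]
    have : (coeff (R := ℝ) (n+1)) (walkGF N) = aseq N (n+1) := by simp [walkGF]
    rw [this]
    show aseq N (n+1) = _
    rw [aseq]
    rw [Finset.Nat.sum_antidiagonal_eq_sum_range_succ_mk
      (fun p : ℕ × ℕ => (coeff (R := ℝ) p.1) (catGF ((N:ℝ)-1)) * (coeff (R := ℝ) p.2) (walkGF N)) n]
    simp only [Finset.mul_sum]
    refine Finset.sum_congr rfl fun i hi => ?_
    rw [coeff_catGF]
    simp [walkGF]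

lemma walkGF_quad (N : ℕ) :
    (1 - C (R := ℝ) ((N:ℝ)^2) * X) * (walkGF N)^2 + C (R := ℝ) ((N:ℝ)-2) * walkGF N
      - C (R := ℝ) ((N:ℝ)-1) = 0 := by
  have hT := catGF_eq ((N:ℝ)-1)
  have hA := walkGF_eq N
  set t := catGF ((N:ℝ)-1)
  set a := walkGF N
  simp only [map_sub, map_one, map_pow, map_ofNat] at hT hA ⊢
  have key : t * a = C (R := ℝ) (N:ℝ) * a - (C (R := ℝ) (N:ℝ) - 1) * t := by
    linear_combination (C (R := ℝ) (N:ℝ) * a) * hT - ((C (R := ℝ) (N:ℝ) - 1) * t) * hA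
  linear_combination (a + C (R := ℝ) (N:ℝ) - 1) * hA + (C (R := ℝ) (N:ℝ) * X * a) * key

lemma genChoose_zero (r : ℝ) : genChoose r 0 = 1 := by simp [genChoose]

lemma genChoose_succ (r : ℝ) (n : ℕ) :
    genChoose r (n+1) = genChoose r n * (r - n) / (n+1) := by
  unfold genChoose
  rw [Finset.prod_range_succ, Nat.factorial_succ]
  push_cast
  rw [div_mul_eq_mul_div, div_div, mul_comm ((n:ℝ)+1)]

lemma catalan_rec (n : ℕ) : (n+2) * catalan (n+1) = (4*n+2) * catalan n := by
  have h1 := Nat.succ_mul_centralBinom_succ n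
  have h2 := succ_mul_catalan_eq_centralBinom (n+1)
  have h3 := succ_mul_catalan_eq_centralBinom n
  have key : (n+1) * ((n+2) * catalan (n+1)) = (n+1) * ((4*n+2) * catalan n) := by
    calc (n+1) * ((n+2) * catalan (n+1)) = (n+1) * (n+1).centralBinom := by rw [h2]
      _ = 2 * (2*n+1) * n.centralBinom := h1
      _ = 2 * (2*n+1) * ((n+1) * catalan n) := by rw [h3]
      _ = (n+1) * ((4*n+2) * catalan n) := by ring
  exact Nat.eq_of_mul_eq_mul_left (Nat.succ_pos n) key

lemma genChoose_half (n : ℕ) :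
    genChoose (1/2) (n+1) * (-4:ℝ)^(n+1) = -2 * catalan n := by
  induction n with
  | zero => norm_num [genChoose_succ, genChoose_zero]
  | succ n ih =>
    rw [genChoose_succ]
    have hc : ((n:ℝ)+1+1) * (catalan (n+1) : ℝ) = (4*(n:ℝ)+2) * catalan n := by
      exact_mod_cast catalan_rec n
    have h2 : ((n:ℕ)+1+1 : ℝ) ≠ 0 := by positivity
    push_cast
    rw [div_mul_eq_mul_div, div_eq_iff h2]
    push_cast
    linear_combination ((1/2 - ((n:ℝ)+1)) * (-4)) * ih + 2 * hc

/-- The square-root series `√(1-4cx)`. -/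
def sGF (c : ℝ) : PowerSeries ℝ := PowerSeries.mk fun n => genChoose (1/2) n * (-(4*c))^n

lemma sGF_eq (c : ℝ) : sGF c = 1 - C (R := ℝ) (2*c) * X * catGF c := by
  ext n
  cases n with
  | zero => simp [sGF, genChoose_zero, coeff_zero_eq_constantCoeff]
  | succ n =>
    have h1 : (coeff (R := ℝ) (n+1)) (1 : PowerSeries ℝ) = 0 := by simp
    rw [map_sub, h1, mul_assoc, coeff_C_mul, coeff_succ_X_mul, coeff_catGF, zero_sub]
    have h2 : (coeff (R := ℝ) (n+1)) (sGF c) = genChoose (1/2) (n+1) * (-(4*c))^(n+1) := by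
      simp [sGF]
    rw [h2]
    have hneg : (-(4*c))^(n+1) = (-4:ℝ)^(n+1) * c^(n+1) := by
      rw [← neg_mul, mul_pow]
    rw [hneg]
    linear_combination (c^(n+1)) * genChoose_half n

lemma sGF_sq (c : ℝ) : sGF c * sGF c = 1 - C (R := ℝ) (4*c) * X := by
  rw [sGF_eq]
  have hT := catGF_eq c
  have h2 : C (R := ℝ) (2*c) = 2 * C (R := ℝ) c := by rw [map_mul, map_ofNat]
  have h4 : C (R := ℝ) (4*c) = 4 * C (R := ℝ) c := by rw [map_mul, map_ofNat]
  rw [h2, h4]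
  linear_combination (-(4*(C (R := ℝ) c)*X)) * hT

/-- Coefficients of the RHS generating function (half grading). -/
def rseq (N : ℕ) (m : ℕ) : ℝ :=
  (N:ℝ)^(2*m) * (1 + (1/2) * ∑ n ∈ Finset.Icc 1 m,
    (N : ℝ) ^ (-(2 * (n : ℤ)) + 1) * genChoose (1 / 2) n * (-1) ^ n
      * (4*((N:ℝ)-1)) ^ n)

def rGF (N : ℕ) : PowerSeries ℝ := PowerSeries.mk (rseq N)

lemma coeff_one_sub_CX (a : ℝ) (f : PowerSeries ℝ) (m : ℕ) :
    coeff (R := ℝ) (m+1) ((1 - C (R := ℝ) a * X) * f) = coeff (R := ℝ) (m+1) f - a * coeff (R := ℝ) m f := by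
  have h : (1 - C (R := ℝ) a * X) * f = f - C (R := ℝ) a * (X * f) := by ring
  rw [h, map_sub, coeff_C_mul, coeff_succ_X_mul]

lemma rseq_step (N : ℕ) (hN : 3 ≤ N) (m : ℕ) :
    2 * (rseq N (m+1) - (N:ℝ)^2 * rseq N m)
      = (N:ℝ) * (genChoose (1/2) (m+1) * (-(4*((N:ℝ)-1)))^(m+1)) := by
  have hN0 : (N:ℝ) ≠ 0 := by
    have : (0:ℕ) < N := by omega
    exact_mod_cast this.ne'
  unfold rseq
  rw [Finset.sum_Icc_succ_top (by omega : 1 ≤ m+1)]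
  have hzp : (N:ℝ)^(2*m) * (N:ℝ)^2 * (N:ℝ)^(-(2 * ((m+1 : ℕ) : ℤ)) + 1) = N := by
    rw [← zpow_natCast (N:ℝ) (2*m), ← zpow_natCast (N:ℝ) 2, ← zpow_add₀ hN0,
      ← zpow_add₀ hN0]
    have : ((2*m : ℕ) : ℤ) + ((2:ℕ):ℤ) + (-(2 * ((m+1 : ℕ) : ℤ)) + 1) = 1 := by
      push_cast; ring
    rw [this, zpow_one]
  have hneg : (-(4*((N:ℝ)-1)))^(m+1) = (-1:ℝ)^(m+1) * (4*((N:ℝ)-1))^(m+1) := by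
    rw [← neg_one_mul, mul_pow]
  rw [hneg]
  have hpow : (N:ℝ)^(2*(m+1)) = (N:ℝ)^(2*m) * (N:ℝ)^2 := by
    rw [← pow_add]; ring_nf
  rw [hpow]
  linear_combination (genChoose (1/2) (m+1) * (-1:ℝ)^(m+1) * (4*((N:ℝ)-1))^(m+1)) * hzp

lemma rGF_linear (N : ℕ) (hN : 3 ≤ N) :
    2 * ((1 - C (R := ℝ) ((N:ℝ)^2) * X) * rGF N)
      = C (R := ℝ) (2-(N:ℝ)) + C (R := ℝ) (N:ℝ) * sGF ((N:ℝ)-1) := by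
  ext m
  cases m with
  | zero =>
    simp only [coeff_zero_eq_constantCoeff, map_mul, map_add, map_sub, map_one]
    simp only [constantCoeff_C, constantCoeff_X, map_ofNat, mul_zero, sub_zero, one_mul]
    have h1 : constantCoeff (R := ℝ) (rGF N) = 1 := by
      simp [rGF, rseq]
    have h2 : constantCoeff (R := ℝ) (sGF ((N:ℝ)-1)) = 1 := by
      simp [sGF, genChoose_zero]
    rw [h1, h2]
    norm_num
  | succ m =>
    rw [show (2 : PowerSeries ℝ) = C (R := ℝ) 2 from (map_ofNat _ 2).symm, coeff_C_mul,
      coeff_one_sub_CX, map_add, coeff_C_mul]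
    rw [coeff_C, if_neg (Nat.succ_ne_zero m)]
    have hr1 : (coeff (R := ℝ) (m+1)) (rGF N) = rseq N (m+1) := coeff_mk _ _
    have hr0 : (coeff (R := ℝ) m) (rGF N) = rseq N m := coeff_mk _ _
    have hs : (coeff (R := ℝ) (m+1)) (sGF ((N:ℝ)-1))
        = genChoose (1/2) (m+1) * (-(4*((N:ℝ)-1)))^(m+1) := coeff_mk _ _
    rw [hr1, hr0, hs, zero_add]
    have := rseq_step N hN m
    linarith [rseq_step N hN m]


lemma rGF_quad (N : ℕ) (hN : 3 ≤ N) :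
    (1 - C (R := ℝ) ((N:ℝ)^2) * X) * (rGF N)^2 + C (R := ℝ) ((N:ℝ)-2) * rGF N
      - C (R := ℝ) ((N:ℝ)-1) = 0 := by
  have hlin := rGF_linear N hN
  have hsq := sGF_sq ((N:ℝ)-1)
  set R := rGF N with hR
  set S := sGF ((N:ℝ)-1) with hS
  have hu : (1 - C (R := ℝ) ((N:ℝ)^2) * X) *
      ((1 - C (R := ℝ) ((N:ℝ)^2) * X) * R^2 + C (R := ℝ) ((N:ℝ)-2) * R - C (R := ℝ) ((N:ℝ)-1)) * 4
        = 0 := by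
    simp only [map_sub, map_ofNat, map_pow, map_mul, map_one] at hlin hsq ⊢
    linear_combination (2*(1 - (C (R := ℝ) (N:ℝ))^2*X)*R + (2 - C (R := ℝ) (N:ℝ)) + C (R := ℝ) (N:ℝ)*S
      + 2*(C (R := ℝ) (N:ℝ) - 2)) * hlin + (C (R := ℝ) (N:ℝ))^2 * hsq
  rcases mul_eq_zero.mp hu with h | h4
  · rcases mul_eq_zero.mp h with hu0 | hG
    · exfalso
      have := congrArg (constantCoeff (R := ℝ)) hu0
      simp at this
    · exact hG
  · exfalso
    have : ((4:ℝ⟦X⟧) : ℝ⟦X⟧) ≠ 0 := by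
      intro h0
      have := congrArg (constantCoeff (R := ℝ)) h0
      rw [map_ofNat, map_zero] at this
      norm_num at this
    exact this h4

lemma walkGF_eq_rGF (N : ℕ) (hN : 3 ≤ N) : walkGF N = rGF N := by
  have hw := walkGF_quad N
  have hr := rGF_quad N hN
  have key : (walkGF N - rGF N) *
      ((1 - C (R := ℝ) ((N:ℝ)^2) * X) * (walkGF N + rGF N) + C (R := ℝ) ((N:ℝ)-2)) = 0 := by
    linear_combination hw - hr
  rcases mul_eq_zero.mp key with h | h
  · exact sub_eq_zero.mp h
  · exfalso
    have hc := congrArg (constantCoeff (R := ℝ)) h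
    have h1 : constantCoeff (R := ℝ) (walkGF N) = 1 := by simp [walkGF, aseq]
    have h2 : constantCoeff (R := ℝ) (rGF N) = 1 := by simp [rGF, rseq]
    simp only [map_add, map_mul, map_sub, map_one, constantCoeff_C, constantCoeff_X,
      map_zero, mul_zero, sub_zero, one_mul, h1, h2, map_pow] at hc
    have h3 : (3:ℝ) ≤ (N:ℝ) := by exact_mod_cast hN
    linarith

/-- Substitute `X ↦ X^2` in a power series. -/
def evenize (f : PowerSeries ℝ) : PowerSeries ℝ :=
  PowerSeries.mk fun k => if 2 ∣ k then coeff (R := ℝ) (k/2) f else 0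

lemma coeff_evenize_even (f : PowerSeries ℝ) (m : ℕ) :
    coeff (R := ℝ) (2*m) (evenize f) = coeff (R := ℝ) m f := by
  simp [evenize, Nat.mul_div_cancel_left m (by norm_num : 0 < 2)]

lemma coeff_evenize_odd (f : PowerSeries ℝ) (k : ℕ) (h : ¬ 2 ∣ k) :
    coeff (R := ℝ) k (evenize f) = 0 := by
  simp [evenize, h]

lemma evenize_add (f g : PowerSeries ℝ) :
    evenize (f + g) = evenize f + evenize g := by
  ext k
  by_cases h : 2 ∣ k <;> simp [evenize, h]

lemma evenize_one : evenize 1 = 1 := by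
  ext k
  rcases k with _ | k
  · simp [evenize]
  · by_cases h : 2 ∣ (k+1)
    · have : (k+1)/2 ≠ 0 := by omega
      simp [evenize, h, coeff_one, this, Nat.succ_ne_zero]
      omega
    · simp [evenize, h, coeff_one, Nat.succ_ne_zero]

lemma evenize_C (a : ℝ) : evenize (C (R := ℝ) a) = C (R := ℝ) a := by
  ext k
  rcases k with _ | k
  · simp [evenize]
  · by_cases h : 2 ∣ (k+1)
    · have : (k+1)/2 ≠ 0 := by omega
      simp [evenize, h, coeff_C, this, Nat.succ_ne_zero]
      exact fun hk => absurd hk (by omega)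
    · simp [evenize, h, coeff_C, Nat.succ_ne_zero]

lemma evenize_X : evenize X = X^2 := by
  ext k
  rw [coeff_X_pow]
  by_cases h : 2 ∣ k
  · obtain ⟨m, rfl⟩ := h
    rw [coeff_evenize_even, coeff_X]
    by_cases hm : m = 1
    · subst hm; norm_num
    · rw [if_neg hm, if_neg (by omega)]
  · rw [coeff_evenize_odd _ _ h, if_neg (by omega)]

lemma even_sum_aux (m : ℕ) (h : ℕ → ℝ) :
    ∑ i ∈ Finset.range (2*m+1), (if 2 ∣ i then h (i/2) else 0)
      = ∑ j ∈ Finset.range (m+1), h j := by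
  induction m with
  | zero => simp
  | succ m ih =>
    have h1 : 2*(m+1)+1 = (2*m+1) + 1 + 1 := by ring
    rw [h1, Finset.sum_range_succ, Finset.sum_range_succ, ih]
    have h2 : ¬ 2 ∣ (2*m+1) := by omega
    have h3 : 2 ∣ (2*m+1+1) := by omega
    have h4 : (2*m+1+1)/2 = m+1 := by omega
    rw [if_neg h2, if_pos h3, h4, add_zero, ← Finset.sum_range_succ]

lemma evenize_mul (f g : PowerSeries ℝ) :
    evenize (f * g) = evenize f * evenize g := by
  ext k
  by_cases h : 2 ∣ k
  · obtain ⟨m, rfl⟩ := h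
    rw [coeff_evenize_even, coeff_mul, coeff_mul,
      Finset.Nat.sum_antidiagonal_eq_sum_range_succ_mk
        (fun p : ℕ × ℕ => coeff (R := ℝ) p.1 f * coeff (R := ℝ) p.2 g) m,
      Finset.Nat.sum_antidiagonal_eq_sum_range_succ_mk
        (fun p : ℕ × ℕ => coeff (R := ℝ) p.1 (evenize f) * coeff (R := ℝ) p.2 (evenize g)) (2*m)]
    rw [← even_sum_aux m (fun j => coeff (R := ℝ) j f * coeff (R := ℝ) (m - j) g)]
    refine Finset.sum_congr rfl fun i hi => ?_
    rw [Finset.mem_range] at hi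
    by_cases h2 : 2 ∣ i
    · obtain ⟨j, rfl⟩ := h2
      rw [if_pos ⟨j, rfl⟩]
      have hj : 2*m - 2*j = 2*(m-j) := by omega
      rw [hj, coeff_evenize_even, coeff_evenize_even]
      have : (2*j)/2 = j := by omega
      rw [this]
    · rw [if_neg h2, coeff_evenize_odd _ _ h2, zero_mul]
  · rw [coeff_evenize_odd _ _ h, coeff_mul]
    refine (Finset.sum_eq_zero fun p hp => ?_).symm
    rw [Finset.HasAntidiagonal.mem_antidiagonal] at hp
    by_cases h1 : 2 ∣ p.1
    · have h2 : ¬ 2 ∣ p.2 := by omega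
      rw [coeff_evenize_odd _ _ h2, mul_zero]
    · rw [coeff_evenize_odd _ _ h1, zero_mul]


lemma regCount_coeff (N : ℕ) (hN : 3 ≤ N) : ∀ (n d : ℕ),
    (regCount N n d : ℝ)
      = coeff (R := ℝ) n (X^d * evenize (catGF ((N:ℝ)-1)^d * walkGF N)) := by
  have hcast : ((N - 1 : ℕ) : ℝ) = (N:ℝ) - 1 := by
    have h1 : 1 ≤ N := by omega
    push_cast [h1]
    ring
  intro n
  induction n with
  | zero =>
    intro d
    rcases d with _ | d
    · have h0 : coeff (R := ℝ) 0 (evenize (catGF ((N:ℝ)-1)^0 * walkGF N))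
          = coeff (R := ℝ) 0 (catGF ((N:ℝ)-1)^0 * walkGF N) :=
        coeff_evenize_even _ 0
      simp only [regCount, if_pos rfl, pow_zero, one_mul, Nat.cast_one] at h0 ⊢
      rw [h0]
      simp [walkGF, aseq, coeff_zero_eq_constantCoeff]
    · show ((0:ℕ):ℝ) = _
      rw [coeff_X_pow_mul', if_neg (by omega : ¬ d+1 ≤ 0)]
      simp
  | succ n ih =>
    intro d
    rcases d with _ | d
    · have hstep : regCount N (n+1) 0 = N * regCount N n 1 := rfl
      rw [hstep, Nat.cast_mul, ih 1]
      have hA := walkGF_eq N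
      have heA : evenize (walkGF N)
          = 1 + C (R := ℝ) (N:ℝ) * (X * (X * evenize (catGF ((N:ℝ)-1) * walkGF N))) := by
        conv_lhs => rw [hA]
        simp only [evenize_add, evenize_one, evenize_mul, evenize_C, evenize_X]
        ring
      simp only [pow_zero, one_mul, pow_one]
      rw [heA, map_add]
      rw [show coeff (R := ℝ) (n+1) (1 : PowerSeries ℝ) = 0 from by simp, zero_add,
        coeff_C_mul, coeff_succ_X_mul]
    · have hstep : regCount N (n+1) (d+1)
          = regCount N n d + (N-1) * regCount N n (d+2) := rfl
      rw [hstep, Nat.cast_add, Nat.cast_mul, ih d, ih (d+2), hcast]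
      set c := (N:ℝ) - 1 with hc
      set A := walkGF N with hA'
      set t := catGF c with ht'
      have ht : t = 1 + C (R := ℝ) c * X * t^2 := catGF_eq c
      have hsplit : t^(d+1) * A = t^d * A + C (R := ℝ) c * (X * (t^(d+2) * A)) := by
        calc t^(d+1) * A = (t^d * A) * t := by ring
          _ = (t^d * A) * (1 + C (R := ℝ) c * X * t^2) := by rw [← ht]
          _ = t^d * A + C (R := ℝ) c * (X * (t^(d+2) * A)) := by ring
      have key : X^(d+1) * evenize (t^(d+1) * A)
          = X * (X^d * evenize (t^d * A))
            + C (R := ℝ) c * (X * (X^(d+2) * evenize (t^(d+2) * A))) := by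
        rw [hsplit]
        simp only [evenize_add, evenize_mul, evenize_C, evenize_X]
        ring
      rw [← coeff_succ_X_mul n (X^d * evenize (t^d * A)),
        ← coeff_succ_X_mul n (X^(d+2) * evenize (t^(d+2) * A))]
      rw [← coeff_C_mul]
      rw [← map_add, ← key]


/-- For even `L` and `N ≥ 3`, the number of length-`L` non-lazy walks on the
`N`-regular tree `T_N` that begin and end at a fixed vertex equals
`N^L (1 + (1/2)∑_{n=1}^{L/2} N^{-2n+1} binomial(1/2,n) (-1)^n γ^{2n})`
with `γ = 2√(N-1)`. -/
theorem returning_walk_count (N L : ℕ) (hN : 3 ≤ N) (hL : Even L) :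
    (regReturningWalks N L : ℝ)
      = (N : ℝ) ^ L * (1 + (1 / 2) * ∑ n ∈ Finset.Icc 1 (L / 2),
          (N : ℝ) ^ (-(2 * (n : ℤ)) + 1) * genChoose (1 / 2) n * (-1) ^ n
            * (2 * Real.sqrt ((N : ℝ) - 1)) ^ (2 * n)) := by
  obtain ⟨m, hm⟩ := hL
  have hL2 : L = 2*m := by omega
  subst hL2
  have hc0 : (0:ℝ) ≤ (N:ℝ) - 1 := by
    have h3 : (3:ℝ) ≤ (N:ℝ) := by exact_mod_cast hN
    linarith
  have h1 : (regReturningWalks N (2*m) : ℝ) = rseq N m := by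
    rw [regReturningWalks_eq]
    rw [regCount_coeff N hN (2*m) 0]
    simp only [pow_zero, one_mul]
    rw [coeff_evenize_even]
    rw [walkGF_eq_rGF N hN]
    exact coeff_mk _ _
  rw [h1]
  unfold rseq
  have hm2 : (2*m)/2 = m := by omega
  rw [hm2]
  have hγ : ∀ n : ℕ, (2*Real.sqrt ((N:ℝ)-1))^(2*n) = (4*((N:ℝ)-1))^n := by
    intro n
    rw [pow_mul]
    congr 1
    rw [mul_pow, Real.sq_sqrt hc0]
    norm_num
  have hsum : (∑ n ∈ Finset.Icc 1 m, (N:ℝ)^(-(2*(n:ℤ))+1) * genChoose (1/2) n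
        * (-1)^n * (2*Real.sqrt ((N:ℝ)-1))^(2*n))
      = ∑ n ∈ Finset.Icc 1 m, (N:ℝ)^(-(2*(n:ℤ))+1) * genChoose (1/2) n
        * (-1)^n * (4*((N:ℝ)-1))^n :=
    Finset.sum_congr rfl fun n _ => by rw [hγ n]
  rw [hsum]
end
end

section
/- If σ is a density matrix on a space of dimension D that is block diagonal with respect to a subspace R (i.e., Π_R σ Π_R^⊥ = 0), then the von Neumann entropy satisfies S(σ) ≤ ln|R| + 2 ln(D)·Tr[Π_R^⊥ σ] + 1/e. -/
open ComplexOrder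

/-- The von Neumann entropy `S(σ) = -Tr[σ ln σ]` of a Hermitian matrix, written in
terms of its eigenvalues (with the convention `0 ln 0 = 0`). -/
noncomputable def vonNeumannEntropy {D : ℕ} (σ : Matrix (Fin D) (Fin D) ℂ)
    (hσ : σ.IsHermitian) : ℝ :=
  -∑ i, hσ.eigenvalues i * Real.log (hσ.eigenvalues i)

section Aux

open Matrix

open Real

lemma aux_negMulLog_le_inv_e {x : ℝ} (hx : 0 ≤ x) : Real.negMulLog x ≤ (Real.exp 1)⁻¹ := by
  rcases eq_or_lt_of_le hx with h | h
  · simp [← h, Real.negMulLog]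
    positivity
  · have h2 : 0 < (Real.exp 1 * x) := by positivity
    have := Real.log_le_sub_one_of_pos (inv_pos.2 h2)
    rw [Real.log_inv, Real.log_mul (Real.exp_pos 1).ne' h.ne', Real.log_exp] at this
    have hineq : -Real.log x ≤ (Real.exp 1 * x)⁻¹ := by linarith
    have := mul_le_mul_of_nonneg_left hineq hx
    rw [Real.negMulLog, neg_mul, ← mul_neg] at *
    calc x * -Real.log x ≤ x * (Real.exp 1 * x)⁻¹ := this
      _ = (Real.exp 1)⁻¹ := by field_simp
lemma aux_neg_mul_log_one_sub_le {t : ℝ} (h0 : 0 ≤ t) (h1 : t ≤ 1) :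
    -((1-t) * Real.log (1-t)) ≤ t := by
  rcases eq_or_lt_of_le h1 with h | h
  · simp [← h]; linarith
  · have hu : 0 < 1 - t := by linarith
    have := Real.one_sub_inv_le_log_of_pos hu
    have h2 := mul_le_mul_of_nonneg_left this hu.le
    have : (1-t) * (1 - (1-t)⁻¹) = (1-t) - 1 := by field_simp
    rw [this] at h2; nlinarith [h2]

lemma aux_jensen {ι : Type*} (s : Finset ι) (w x : ι → ℝ)
    (hw : ∀ i ∈ s, 0 ≤ w i) (hx : ∀ i ∈ s, 0 ≤ x i) :
    ∑ i ∈ s, w i * Real.negMulLog (x i) ≤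
      (∑ i ∈ s, w i) * Real.negMulLog ((∑ i ∈ s, w i * x i) / (∑ i ∈ s, w i)) := by
  set W := ∑ i ∈ s, w i with hW
  rcases eq_or_lt_of_le (Finset.sum_nonneg hw) with h | h
  · have hz : ∀ i ∈ s, w i = 0 := by
      intro i hi
      exact (Finset.sum_eq_zero_iff_of_nonneg hw).1 h.symm i hi
    have hL : ∑ i ∈ s, w i * Real.negMulLog (x i) = 0 :=
      Finset.sum_eq_zero (fun i hi => by rw [hz i hi, zero_mul])
    have hW0 : W = 0 := h.symm
    rw [hL, hW0, zero_mul]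
  · have hsum1 : ∑ i ∈ s, w i / W = 1 := by
      rw [← Finset.sum_div]; exact div_self h.ne'
    have := Real.concaveOn_negMulLog.le_map_sum (t := s) (w := fun i => w i / W)
      (p := x) (fun i hi => div_nonneg (hw i hi) h.le) hsum1 (fun i hi => hx i hi)
    simp only [smul_eq_mul] at this
    have h2 := mul_le_mul_of_nonneg_left this h.le
    calc ∑ i ∈ s, w i * Real.negMulLog (x i)
        = W * ∑ i ∈ s, w i / W * Real.negMulLog (x i) := by
          rw [Finset.mul_sum]; apply Finset.sum_congr rfl; intro i hi; field_simp
          rw [mul_div_assoc, div_self (show W ≠ 0 from h.ne'), mul_one]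
      _ ≤ W * Real.negMulLog (∑ i ∈ s, w i / W * x i) := h2
      _ = W * Real.negMulLog ((∑ i ∈ s, w i * x i) / W) := by
          have he : ∑ i ∈ s, w i / W * x i = (∑ i ∈ s, w i * x i) / W := by
            rw [Finset.sum_div]; exact Finset.sum_congr rfl (fun i hi => by ring)
          rw [he]

lemma aux_expand (c y : ℝ) (hc : 0 < c) (hy : 0 ≤ y) :
    c * Real.negMulLog (y/c) = -(y * Real.log y) + y * Real.log c := by
  rcases eq_or_lt_of_le hy with h | h
  · simp [← h]
  · rw [Real.negMulLog, Real.log_div h.ne' hc.ne']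
    field_simp
    ring

lemma aux_quarter {t : ℝ} (h0 : 0 ≤ t) :
    -(t * Real.log t) + t - 2*t*Real.log 2 ≤ 1/4 := by
  have he : (0:ℝ) < Real.exp 1 := Real.exp_pos 1
  have key : -(t * Real.log t) + t - 2*t*Real.log 2
      = (Real.exp 1/4) * Real.negMulLog (4*t/Real.exp 1) := by
    rcases eq_or_lt_of_le h0 with h | h
    · simp [← h, Real.negMulLog]
    · rw [Real.negMulLog, Real.log_div (by positivity) he.ne', Real.log_exp,
        show (4:ℝ)*t = 2^2*t by norm_num, Real.log_mul (by positivity) h.ne',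
        Real.log_pow]
      field_simp
      ring
  rw [key]
  have hb := aux_negMulLog_le_inv_e (x := 4*t/Real.exp 1) (by positivity)
  have := mul_le_mul_of_nonneg_left hb (by positivity : (0:ℝ) ≤ Real.exp 1/4)
  calc (Real.exp 1/4) * Real.negMulLog (4*t/Real.exp 1)
      ≤ (Real.exp 1/4) * (Real.exp 1)⁻¹ := this
    _ = 1/4 := by field_simp

lemma aux_final (D r : ℕ) (hrD : r ≤ D) (hD : 1 ≤ D) (t : ℝ) (h0 : 0 ≤ t) (h1 : t ≤ 1)
    (hr0 : r = 0 → t = 1) (hrD0 : r = D → t = 0) :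
    (r:ℝ) * Real.negMulLog ((1-t)/(r:ℝ)) + ((D:ℝ) - r) * Real.negMulLog (t/((D:ℝ)-r)) ≤
      Real.log r + 2 * Real.log D * t + 1/Real.exp 1 := by
  have hDpos : (0:ℝ) < D := by exact_mod_cast hD
  have hlogD : 0 ≤ Real.log D := Real.log_nonneg (by exact_mod_cast hD)
  have hepos : (0:ℝ) < 1/Real.exp 1 := by positivity
  rcases Nat.eq_zero_or_pos r with hr | hrpos
  · -- r = 0, t = 1
    have ht : t = 1 := hr0 hr
    subst hr ht
    simp only [Nat.cast_zero, zero_mul, sub_zero, zero_add, Real.log_zero]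
    rw [aux_expand _ 1 hDpos zero_le_one]
    simp only [Real.log_one, mul_zero, neg_zero, one_mul, zero_add, mul_one]
    linarith
  rcases eq_or_lt_of_le hrD with hr | hrlt
  · -- r = D, t = 0
    have ht : t = 0 := hrD0 hr
    subst ht
    have hrpos' : (0:ℝ) < r := by exact_mod_cast hrpos
    rw [sub_zero, aux_expand _ 1 hrpos' zero_le_one]
    simp only [Real.log_one, mul_zero, neg_zero, one_mul, zero_add, mul_zero, zero_mul]
    have : ((D:ℝ) - r) = 0 := by rw [hr]; ring
    rw [this, zero_mul]
    linarith
  · -- 1 ≤ r < D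
    have hrpos' : (0:ℝ) < r := by exact_mod_cast hrpos
    have hKpos : (0:ℝ) < (D:ℝ) - r := by
      have : (r:ℝ) < D := by exact_mod_cast hrlt
      linarith
    have hK1 : (D:ℝ) - r ≤ (D:ℝ) - 1 := by
      have : (1:ℝ) ≤ r := by exact_mod_cast hrpos
      linarith
    have hD2 : (2:ℝ) ≤ D := by
      have : r + 1 ≤ D := hrlt
      have : (r:ℝ) + 1 ≤ D := by exact_mod_cast this
      linarith
    rw [aux_expand _ _ hrpos' (by linarith), aux_expand _ _ hKpos h0]
    have hlogr : 0 ≤ Real.log r := Real.log_nonneg (by exact_mod_cast hrpos)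
    have b1 : (1-t) * Real.log r ≤ Real.log r := by nlinarith
    have b2 : -((1-t) * Real.log (1-t)) ≤ t := aux_neg_mul_log_one_sub_le h0 h1
    have b3 : t * Real.log ((D:ℝ) - r) ≤ t * (2 * Real.log D - 2 * Real.log 2) := by
      apply mul_le_mul_of_nonneg_left _ h0
      have hKle : (D:ℝ) - r ≤ (D:ℝ)^2/4 := by nlinarith
      calc Real.log ((D:ℝ) - r) ≤ Real.log ((D:ℝ)^2/4) := Real.log_le_log hKpos hKle
        _ = 2 * Real.log D - 2 * Real.log 2 := by
            rw [Real.log_div (by positivity) (by norm_num), Real.log_pow,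
              show (4:ℝ) = 2^2 by norm_num, Real.log_pow]
            push_cast; ring
    have b4 := aux_quarter h0
    have e4 : (1:ℝ)/4 ≤ 1/Real.exp 1 := by
      apply one_div_le_one_div_of_le (Real.exp_pos 1)
      have := Real.exp_one_lt_d9
      linarith
    linarith


lemma aux_diag_nonneg {n : Type*} [Fintype n] [DecidableEq n] {M : Matrix n n ℂ}
    (h : M.PosSemidef) (i : n) : 0 ≤ (M i i).re := by
  have h2 := h.diag_nonneg (i := i)
  exact (Complex.le_def.mp h2).1

lemma aux_trace_eq {n : ℕ} (A : Matrix (Fin n) (Fin n) ℂ) (hA : A.IsHermitian) :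
    A.trace = ∑ i, (hA.eigenvalues i : ℂ) := by
  conv_lhs => rw [hA.spectral_theorem]
  rw [Unitary.conjStarAlgAut_apply, Matrix.trace_mul_cycle,
    (Matrix.mem_unitaryGroup_iff').mp (hA.eigenvectorUnitary).2, one_mul,
    Matrix.trace_diagonal]
  rfl

lemma aux_idem_eigs {n : ℕ} (A : Matrix (Fin n) (Fin n) ℂ) (hA : A.IsHermitian)
    (hidem : A * A = A) (i : Fin n) : hA.eigenvalues i = 0 ∨ hA.eigenvalues i = 1 := by
  have hv := hA.mulVec_eigenvectorBasis i
  have h2 : A *ᵥ (A *ᵥ ⇑(hA.eigenvectorBasis i)) = A *ᵥ ⇑(hA.eigenvectorBasis i) := by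
    rw [Matrix.mulVec_mulVec, hidem]
  rw [hv, Matrix.mulVec_smul, hv, smul_smul] at h2
  have hvne : ⇑(hA.eigenvectorBasis i) ≠ 0 := by
    intro hz
    apply hA.eigenvectorBasis.orthonormal.ne_zero i
    ext x
    exact congrFun hz x
  have h3 : (hA.eigenvalues i * hA.eigenvalues i - hA.eigenvalues i) • ⇑(hA.eigenvectorBasis i) = 0 := by
    rw [sub_smul, h2, sub_self]
  rcases smul_eq_zero.mp h3 with h4 | h4
  · have : hA.eigenvalues i * (hA.eigenvalues i - 1) = 0 := by ring_nf; ring_nf at h4; linarith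
    rcases mul_eq_zero.mp this with h5 | h5
    · exact Or.inl h5
    · exact Or.inr (by linarith)
  · exact absurd h4 hvne

lemma aux_trace_idem {n : ℕ} (P : Matrix (Fin n) (Fin n) ℂ) (hP : P.IsHermitian)
    (hproj : P * P = P) : P.trace = (P.rank : ℂ) := by
  classical
  rw [aux_trace_eq P hP, hP.rank_eq_card_non_zero_eigs]
  rw [Fintype.card_subtype]
  have : ∀ i, (hP.eigenvalues i : ℂ) = if hP.eigenvalues i ≠ 0 then 1 else 0 := by
    intro i
    rcases aux_idem_eigs P hP hproj i with h | h <;> simp [h]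
  rw [Finset.sum_congr rfl (fun i _ => this i), Finset.sum_ite, Finset.sum_const,
    Finset.sum_const_zero, add_zero, nsmul_eq_mul, mul_one]


theorem entropy_block_bound' (D : ℕ) (σ P : Matrix (Fin D) (Fin D) ℂ)
    (hσ : σ.PosSemidef) (htr : σ.trace = 1)
    (hP : P.IsHermitian) (hproj : P * P = P)
    (hblock : P * σ * (1 - P) = 0) :
    (∑ i, Real.negMulLog (hσ.1.eigenvalues i)) ≤
      Real.log (P.rank : ℝ) + 2 * Real.log (D : ℝ) * ((1 - P) * σ).trace.re
        + 1 / Real.exp 1 := by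
  classical
  rcases Nat.eq_zero_or_pos D with hD0 | hD1
  · subst hD0
    simp [Matrix.trace] at htr
  set lam := hσ.1.eigenvalues with hlamdef
  have hlam0 : ∀ i, 0 ≤ lam i := fun i => hσ.eigenvalues_nonneg i
  set V : Matrix (Fin D) (Fin D) ℂ := ↑(hσ.1.eigenvectorUnitary) with hVdef
  have hV1 : V * star V = 1 := (Matrix.mem_unitaryGroup_iff).mp (hσ.1.eigenvectorUnitary).2
  have hV2 : star V * V = 1 := (Matrix.mem_unitaryGroup_iff').mp (hσ.1.eigenvectorUnitary).2
  have hspec : σ = V * Matrix.diagonal (RCLike.ofReal ∘ lam) * star V := hσ.1.spectral_theorem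
  set Q : Matrix (Fin D) (Fin D) ℂ := 1 - P with hQdef
  have hQH : Q.IsHermitian := (Matrix.isHermitian_one).sub hP
  have hQidem : Q * Q = Q := by
    have : (1 - P) * (1 - P) = 1 - P - (P - P * P) := by noncomm_ring
    rw [hproj, sub_self, sub_zero] at this
    exact this
  set N := star V * Q * V with hNdef
  have hNpsd : N.PosSemidef := by
    have he : (Q * V)ᴴ * (Q * V) = N := by
      rw [Matrix.conjTranspose_mul, ← Matrix.star_eq_conjTranspose V, hQH.eq, hNdef]
      have h2 : star V * Q * (Q * V) = star V * (Q * Q) * V := by noncomm_ring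
      rw [h2, hQidem]
    rw [← he]
    exact Matrix.posSemidef_conjTranspose_mul_self _
  have hNN : 1 - N = (P * V)ᴴ * (P * V) := by
    rw [Matrix.conjTranspose_mul, ← Matrix.star_eq_conjTranspose V]
    have h2 : star V * Pᴴ * (P * V) = star V * (Pᴴ * P) * V := by noncomm_ring
    rw [h2, hP.eq, hproj]
    have h3 : star V * Q * V + star V * P * V = star V * ((Q + P) * V) := by noncomm_ring
    have h4 : Q + P = 1 := by rw [hQdef, sub_add_cancel]
    have h5 : N + star V * P * V = 1 := by
      rw [hNdef, h3, h4, Matrix.one_mul, hV2]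
    rw [← h5, add_sub_cancel_left]
  have h1Npsd : (1 - N).PosSemidef := by
    rw [hNN]; exact Matrix.posSemidef_conjTranspose_mul_self _
  set mu : Fin D → ℝ := fun i => (N i i).re with hmudef
  have hmu0 : ∀ i, 0 ≤ mu i := fun i => aux_diag_nonneg hNpsd i
  have hmu1 : ∀ i, mu i ≤ 1 := by
    intro i
    have := aux_diag_nonneg h1Npsd i
    rw [Matrix.sub_apply, Matrix.one_apply_eq, Complex.sub_re, Complex.one_re] at this
    linarith
  -- trace N = D - rank
  have htrN : N.trace = (D : ℂ) - (P.rank : ℂ) := by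
    rw [hNdef, Matrix.trace_mul_cycle, hV1, Matrix.one_mul, hQdef, Matrix.trace_sub,
      Matrix.trace_one, aux_trace_idem P hP hproj]
    simp
  have hmusum : ∑ i, mu i = (D : ℝ) - (P.rank : ℝ) := by
    have : (∑ i, mu i) = N.trace.re := by
      rw [Matrix.trace, Complex.re_sum]
      rfl
    rw [this, htrN]
    simp
  -- sum of eigenvalues = 1
  have hsumlam : ∑ i, lam i = 1 := by
    have h1 := aux_trace_eq σ hσ.1
    rw [htr] at h1
    have : ((∑ i, lam i : ℝ) : ℂ) = 1 := by push_cast; rw [← h1]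
    exact_mod_cast this
  -- trace re identity
  set t : ℝ := ∑ i, mu i * lam i with htdef
  have ht : ((1 - P) * σ).trace.re = t := by
    have h1 : (1 - P) * σ = (Q * V * Matrix.diagonal (RCLike.ofReal ∘ lam)) * star V := by
      rw [← hQdef]
      conv_lhs => rw [hspec]
      noncomm_ring
    have h2 : ((1 - P) * σ).trace = (N * Matrix.diagonal (RCLike.ofReal ∘ lam)).trace := by
      rw [h1, Matrix.trace_mul_comm, hNdef]
      congr 1
      noncomm_ring
    rw [h2, Matrix.trace, Complex.re_sum]
    apply Finset.sum_congr rfl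
    intro i _
    rw [Matrix.diag_apply, Matrix.mul_diagonal]
    simp [hmudef, Complex.mul_re]
  have h0t : 0 ≤ t := Finset.sum_nonneg fun i _ => mul_nonneg (hmu0 i) (hlam0 i)
  have h1t : t ≤ 1 := by
    rw [htdef, ← hsumlam]
    apply Finset.sum_le_sum
    intro i _
    nlinarith [hmu0 i, hmu1 i, hlam0 i]
  have hrD : P.rank ≤ D := by
    have := Matrix.rank_le_card_width P
    simpa using this
  -- edge hypotheses
  have hr0 : P.rank = 0 → t = 1 := by
    intro h
    have hs : ∑ i, (1 - mu i) = 0 := by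
      rw [Finset.sum_sub_distrib, hmusum, h]
      simp
    have hall : ∀ i ∈ Finset.univ, (1 : ℝ) - mu i = 0 :=
      (Finset.sum_eq_zero_iff_of_nonneg (fun i _ => by linarith [hmu1 i])).mp hs
    rw [htdef, ← hsumlam]
    apply Finset.sum_congr rfl
    intro i _
    have := hall i (Finset.mem_univ i)
    have : mu i = 1 := by linarith
    rw [this, one_mul]
  have hrD0 : P.rank = D → t = 0 := by
    intro h
    have hs : ∑ i, mu i = 0 := by rw [hmusum, h]; ring
    have hall : ∀ i ∈ Finset.univ, mu i = 0 :=
      (Finset.sum_eq_zero_iff_of_nonneg (fun i _ => hmu0 i)).mp hs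
    rw [htdef]
    apply Finset.sum_eq_zero
    intro i _
    rw [hall i (Finset.mem_univ i), zero_mul]
  -- split and Jensen
  have hsplit : (∑ i, Real.negMulLog (lam i)) =
      (∑ i, (1 - mu i) * Real.negMulLog (lam i)) + ∑ i, mu i * Real.negMulLog (lam i) := by
    rw [← Finset.sum_add_distrib]
    apply Finset.sum_congr rfl
    intro i _
    ring
  have hJ1 := aux_jensen Finset.univ (fun i => 1 - mu i) lam
    (fun i _ => by show (0:ℝ) ≤ 1 - mu i; linarith [hmu1 i]) (fun i _ => hlam0 i)
  have hJ2 := aux_jensen Finset.univ mu lam (fun i _ => hmu0 i) (fun i _ => hlam0 i)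
  have hs1 : ∑ i, (1 - mu i) = (P.rank : ℝ) := by
    rw [Finset.sum_sub_distrib, hmusum]
    simp
  have hs2 : ∑ i, (1 - mu i) * lam i = 1 - t := by
    have he : ∑ i, (1 - mu i) * lam i = (∑ i, lam i) - ∑ i, mu i * lam i := by
      rw [← Finset.sum_sub_distrib]
      exact Finset.sum_congr rfl (fun i _ => by ring)
    rw [he, hsumlam, htdef]
  rw [hs1, hs2] at hJ1
  rw [hmusum, ← htdef] at hJ2
  have hfin := aux_final D P.rank hrD hD1 t h0t h1t hr0 hrD0
  rw [ht]
  calc (∑ i, Real.negMulLog (lam i))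
      = (∑ i, (1 - mu i) * Real.negMulLog (lam i)) + ∑ i, mu i * Real.negMulLog (lam i) := hsplit
    _ ≤ (P.rank : ℝ) * Real.negMulLog ((1 - t) / (P.rank : ℝ))
        + ((D : ℝ) - P.rank) * Real.negMulLog (t / ((D : ℝ) - P.rank)) := add_le_add hJ1 hJ2
    _ ≤ Real.log (P.rank : ℝ) + 2 * Real.log (D : ℝ) * t + 1 / Real.exp 1 := hfin

end Aux

/-- If `σ` is a density matrix on a space of dimension `D` that is block diagonal
with respect to a subspace `R` with projector `P` (i.e. `PσP^⊥ = 0`), then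
`S(σ) ≤ ln|R| + 2 ln(D)·Tr[(1-P)σ] + 1/e`, where `|R| = rank P` is the dimension
of `R`. -/
theorem entropy_block_bound (D : ℕ) (σ P : Matrix (Fin D) (Fin D) ℂ)
    (hσ : σ.PosSemidef) (htr : σ.trace = 1)
    (hP : P.IsHermitian) (hproj : P * P = P)
    (hblock : P * σ * (1 - P) = 0) :
    vonNeumannEntropy σ hσ.1 ≤
      Real.log (P.rank : ℝ) + 2 * Real.log (D : ℝ) * ((1 - P) * σ).trace.re
        + 1 / Real.exp 1 := by
  have hS : vonNeumannEntropy σ hσ.1 = ∑ i, Real.negMulLog (hσ.1.eigenvalues i) := by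
    rw [vonNeumannEntropy, ← Finset.sum_neg_distrib]
    exact Finset.sum_congr rfl (fun i _ => by rw [Real.negMulLog, neg_mul])
  rw [hS]
  exact entropy_block_bound' D σ P hσ htr hP hproj hblock
end
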